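/- Soundness and completeness of the categorical semantics: for a higher-order rewrite system X, there is an identity-on-objects, identity-on-morphisms, locally full strict cartesian closed 2-functor from the free cartesian closed 2-category H(X) (whose 2-cells are reductions modulo permutation equivalence) to the rewriting 2-category R(X); i.e., there is a 2-cell M ⟶ N in H(X) iff M rewrites to N in the usual sense. -/
import Mathlib


/-! Syntax of the 2-λ-calculus over a 2-signature, following
"Cartesian closed 2-categories and permutation equivalence in
higher-order rewriting". -/

/-- Simple types over a set `S` of sorts: `A ::= s | 1 | A × B | B^A`
(`arr A B` denotes `B^A`). -/
inductive Ty (S : Type) : Type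
  | base (s : S)
  | unit
  | prod (A B : Ty S)
  | arr (A B : Ty S)

/-- A 1-signature over a fixed set `S` of sorts: operations with arities. -/
structure Sig1 (S : Type) : Type 1 where
  Op : Type
  opCtx : Op → List (Ty S)
  opTy : Op → Ty S

variable {S : Type}

/-- Raw λ-terms (de Bruijn indices) over a 1-signature.  Constant
application `const c args` applies an operation to a tuple of terms
(indices `≥ arity` are ignored by the typing rules). -/
inductive Tm (Sg : Sig1 S) : Type
  | var (n : ℕ)
  | unit
  | pair (M N : Tm Sg)
  | fst (M : Tm Sg)
  | snd (M : Tm Sg)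
  | lam (A : Ty S) (M : Tm Sg)
  | app (M N : Tm Sg)
  | const (c : Sg.Op) (args : ℕ → Tm Sg)

namespace Tm

variable {Sg : Sig1 S}

/-- Lift a renaming under a binder. -/
def liftRen (f : ℕ → ℕ) : ℕ → ℕ
  | 0 => 0
  | n + 1 => f n + 1

/-- Renaming of variables. -/
def ren (f : ℕ → ℕ) : Tm Sg → Tm Sg
  | var n => var (f n)
  | unit => unit
  | pair M N => pair (M.ren f) (N.ren f)
  | fst M => fst (M.ren f)
  | snd M => snd (M.ren f)
  | lam A M => lam A (M.ren (liftRen f))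
  | app M N => app (M.ren f) (N.ren f)
  | const c a => const c (fun i => (a i).ren f)

/-- Lift a simultaneous substitution under a binder. -/
def liftSub (σ : ℕ → Tm Sg) : ℕ → Tm Sg
  | 0 => var 0
  | n + 1 => (σ n).ren Nat.succ

/-- Simultaneous substitution. -/
def sub (σ : ℕ → Tm Sg) : Tm Sg → Tm Sg
  | var n => σ n
  | unit => unit
  | pair M N => pair (M.sub σ) (N.sub σ)
  | fst M => fst (M.sub σ)
  | snd M => snd (M.sub σ)
  | lam A M => lam A (M.sub (liftSub σ))
  | app M N => app (M.sub σ) (N.sub σ)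
  | const c a => const c (fun i => (a i).sub σ)

/-- Extension of a substitution by a term (for substituting a single
variable). -/
def cons (M : Tm Sg) (σ : ℕ → Tm Sg) : ℕ → Tm Sg
  | 0 => M
  | n + 1 => σ n

end Tm

/-- Typing judgement `Γ ⊢ M : A` for λ-terms. -/
inductive HasTy (Sg : Sig1 S) : List (Ty S) → Tm Sg → Ty S → Prop
  | var {Γ : List (Ty S)} {n : ℕ} (h : n < Γ.length) :
      HasTy Sg Γ (.var n) (Γ.get ⟨n, h⟩)
  | unit {Γ} : HasTy Sg Γ .unit .unit
  | pair {Γ M N A B} : HasTy Sg Γ M A → HasTy Sg Γ N B →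
      HasTy Sg Γ (.pair M N) (.prod A B)
  | fst {Γ M A B} : HasTy Sg Γ M (.prod A B) → HasTy Sg Γ (.fst M) A
  | snd {Γ M A B} : HasTy Sg Γ M (.prod A B) → HasTy Sg Γ (.snd M) B
  | lam {Γ M A B} : HasTy Sg (A :: Γ) M B → HasTy Sg Γ (.lam A M) (.arr A B)
  | app {Γ M N A B} : HasTy Sg Γ M (.arr A B) → HasTy Sg Γ N A →
      HasTy Sg Γ (.app M N) B
  | const {Γ} {c : Sg.Op} {args : ℕ → Tm Sg}
      (h : ∀ i (hi : i < (Sg.opCtx c).length),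
        HasTy Sg Γ (args i) ((Sg.opCtx c).get ⟨i, hi⟩)) :
      HasTy Sg Γ (.const c args) (Sg.opTy c)

/-- βη-equivalence of well-typed λ-terms. -/
inductive Beq (Sg : Sig1 S) : List (Ty S) → Tm Sg → Tm Sg → Ty S → Prop
  | refl {Γ M A} : HasTy Sg Γ M A → Beq Sg Γ M M A
  | symm {Γ M N A} : Beq Sg Γ M N A → Beq Sg Γ N M A
  | trans {Γ M N P A} : Beq Sg Γ M N A → Beq Sg Γ N P A → Beq Sg Γ M P A
  | pairCong {Γ M M' N N' A B} : Beq Sg Γ M M' A → Beq Sg Γ N N' B →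
      Beq Sg Γ (.pair M N) (.pair M' N') (.prod A B)
  | fstCong {Γ M M' A B} : Beq Sg Γ M M' (.prod A B) →
      Beq Sg Γ (.fst M) (.fst M') A
  | sndCong {Γ M M' A B} : Beq Sg Γ M M' (.prod A B) →
      Beq Sg Γ (.snd M) (.snd M') B
  | lamCong {Γ M M' A B} : Beq Sg (A :: Γ) M M' B →
      Beq Sg Γ (.lam A M) (.lam A M') (.arr A B)
  | appCong {Γ M M' N N' A B} : Beq Sg Γ M M' (.arr A B) → Beq Sg Γ N N' A →
      Beq Sg Γ (.app M N) (.app M' N') B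
  | constCong {Γ} {c : Sg.Op} {args args' : ℕ → Tm Sg}
      (h : ∀ i (hi : i < (Sg.opCtx c).length),
        Beq Sg Γ (args i) (args' i) ((Sg.opCtx c).get ⟨i, hi⟩)) :
      Beq Sg Γ (.const c args) (.const c args') (Sg.opTy c)
  | beta {Γ M N A B} : HasTy Sg (A :: Γ) M B → HasTy Sg Γ N A →
      Beq Sg Γ (.app (.lam A M) N) (M.sub (Tm.cons N .var)) B
  | eta {Γ M A B} : HasTy Sg Γ M (.arr A B) →
      Beq Sg Γ M (.lam A (.app (M.ren Nat.succ) (.var 0))) (.arr A B)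
  | prodBeta1 {Γ M N A B} : HasTy Sg Γ M A → HasTy Sg Γ N B →
      Beq Sg Γ (.fst (.pair M N)) M A
  | prodBeta2 {Γ M N A B} : HasTy Sg Γ M A → HasTy Sg Γ N B →
      Beq Sg Γ (.snd (.pair M N)) N B
  | prodEta {Γ M A B} : HasTy Sg Γ M (.prod A B) →
      Beq Sg Γ M (.pair (.fst M) (.snd M)) (.prod A B)
  | unitEta {Γ M} : HasTy Sg Γ M .unit → Beq Sg Γ M .unit .unit

/-- A 2-signature: a 1-signature together with a set of reduction rules
between parallel terms. -/
structure Sig2 (S : Type) : Type 1 where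
  sig : Sig1 S
  Rule : Type
  ruleCtx : Rule → List (Ty S)
  ruleTy : Rule → Ty S
  lhs : Rule → Tm sig
  rhs : Rule → Tm sig

/-- Raw reduction terms ("proof terms") over a 1-signature `Sg` and a set `R`
of reduction-rule names.  `vcomp P M Q` is the vertical composite
`P ;_M Q`. -/
inductive Rd (Sg : Sig1 S) (R : Type) : Type
  | var (n : ℕ)
  | unit
  | pair (P Q : Rd Sg R)
  | fst (P : Rd Sg R)
  | snd (P : Rd Sg R)
  | lam (A : Ty S) (P : Rd Sg R)
  | app (P Q : Rd Sg R)
  | const (c : Sg.Op) (args : ℕ → Rd Sg R)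
  | rule (r : R) (args : ℕ → Rd Sg R)
  | vcomp (P : Rd Sg R) (M : Tm Sg) (Q : Rd Sg R)

namespace Rd

variable {Sg : Sig1 S} {R R' : Type}

/-- Every term is an identity reduction on itself. -/
def toRd : Tm Sg → Rd Sg R
  | .var n => var n
  | .unit => unit
  | .pair M N => pair (toRd M) (toRd N)
  | .fst M => fst (toRd M)
  | .snd M => snd (toRd M)
  | .lam A M => lam A (toRd M)
  | .app M N => app (toRd M) (toRd N)
  | .const c a => const c (fun i => toRd (a i))

/-- Renaming of variables in reductions. -/
def ren (f : ℕ → ℕ) : Rd Sg R → Rd Sg R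
  | var n => var (f n)
  | unit => unit
  | pair P Q => pair (P.ren f) (Q.ren f)
  | fst P => fst (P.ren f)
  | snd P => snd (P.ren f)
  | lam A P => lam A (P.ren (Tm.liftRen f))
  | app P Q => app (P.ren f) (Q.ren f)
  | const c a => const c (fun i => (a i).ren f)
  | rule r a => rule r (fun i => (a i).ren f)
  | vcomp P M Q => vcomp (P.ren f) (M.ren f) (Q.ren f)

/-- Relabelling of rule names in a reduction. -/
def mapRule (g : R → R') : Rd Sg R → Rd Sg R'
  | var n => var n
  | unit => unit
  | pair P Q => pair (P.mapRule g) (Q.mapRule g)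
  | fst P => fst (P.mapRule g)
  | snd P => snd (P.mapRule g)
  | lam A P => lam A (P.mapRule g)
  | app P Q => app (P.mapRule g) (Q.mapRule g)
  | const c a => const c (fun i => (a i).mapRule g)
  | rule r a => rule (g r) (fun i => (a i).mapRule g)
  | vcomp P M Q => vcomp (P.mapRule g) M (Q.mapRule g)

/-- Lift a tuple of reductions under a binder. -/
def liftRd (Q : ℕ → Rd Sg R) : ℕ → Rd Sg R
  | 0 => var 0
  | n + 1 => (Q n).ren Nat.succ

/-- Extension of a tuple of reductions by a reduction. -/
def consRd (P : Rd Sg R) (τ : ℕ → Rd Sg R) : ℕ → Rd Sg R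
  | 0 => P
  | n + 1 => τ n

end Rd

/-- Left whiskering `M[Q]` of a term `M` by a tuple of reductions `Q`. -/
def lw {Sg : Sig1 S} {R : Type} (Q : ℕ → Rd Sg R) : Tm Sg → Rd Sg R
  | .var n => Q n
  | .unit => .unit
  | .pair M N => .pair (lw Q M) (lw Q N)
  | .fst M => .fst (lw Q M)
  | .snd M => .snd (lw Q M)
  | .lam A M => .lam A (lw (Rd.liftRd Q) M)
  | .app M N => .app (lw Q M) (lw Q N)
  | .const c a => .const c (fun i => lw Q (a i))

/-- Right whiskering `P[N]` of a reduction `P` by a tuple of terms `N`. -/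
def rw {Sg : Sig1 S} {R : Type} (N : ℕ → Tm Sg) : Rd Sg R → Rd Sg R
  | .var n => Rd.toRd (N n)
  | .unit => .unit
  | .pair P Q => .pair (rw N P) (rw N Q)
  | .fst P => .fst (rw N P)
  | .snd P => .snd (rw N P)
  | .lam A P => .lam A (rw (Tm.liftSub N) P)
  | .app P Q => .app (rw N P) (rw N Q)
  | .const c a => .const c (fun i => rw N (a i))
  | .rule r a => .rule r (fun i => rw N (a i))
  | .vcomp P M Q => .vcomp (rw N P) (M.sub N) (rw N Q)

/-- Substitution of a tuple of reductions `Q : N ⟶ N'` into a reduction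
`P : M ⟶ M'`, defined as `P[N] ;_{M'[N]} M'[Q]`. -/
def rdSub {Sg : Sig1 S} {R : Type} (P : Rd Sg R) (N : ℕ → Tm Sg) (M' : Tm Sg)
    (Q : ℕ → Rd Sg R) : Rd Sg R :=
  .vcomp (rw N P) (M'.sub N) (lw Q M')

/-- The typing judgement `Γ ⊢ P : M ⟶ N : A` for reductions. -/
inductive RdJ (X : Sig2 S) : List (Ty S) → Rd X.sig X.Rule → Tm X.sig → Tm X.sig → Ty S → Prop
  | rule {Γ} {r : X.Rule} {args : ℕ → Rd X.sig X.Rule} {Ms Ns : ℕ → Tm X.sig}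
      (h : ∀ i (hi : i < (X.ruleCtx r).length),
        RdJ X Γ (args i) (Ms i) (Ns i) ((X.ruleCtx r).get ⟨i, hi⟩)) :
      RdJ X Γ (.rule r args) ((X.lhs r).sub Ms) ((X.rhs r).sub Ns) (X.ruleTy r)
  | vcomp {Γ P Q M₁ M₂ M₃ A} : RdJ X Γ P M₁ M₂ A → RdJ X Γ Q M₂ M₃ A →
      RdJ X Γ (.vcomp P M₂ Q) M₁ M₃ A
  | var {Γ : List (Ty S)} {n : ℕ} (h : n < Γ.length) :
      RdJ X Γ (.var n) (.var n) (.var n) (Γ.get ⟨n, h⟩)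
  | unit {Γ} : RdJ X Γ .unit .unit .unit .unit
  | const {Γ} {c : X.sig.Op} {args : ℕ → Rd X.sig X.Rule} {Ms Ns : ℕ → Tm X.sig}
      (h : ∀ i (hi : i < (X.sig.opCtx c).length),
        RdJ X Γ (args i) (Ms i) (Ns i) ((X.sig.opCtx c).get ⟨i, hi⟩)) :
      RdJ X Γ (.const c args) (.const c Ms) (.const c Ns) (X.sig.opTy c)
  | lam {Γ P M N A B} : RdJ X (A :: Γ) P M N B →
      RdJ X Γ (.lam A P) (.lam A M) (.lam A N) (.arr A B)
  | app {Γ P Q M M' N N' A B} : RdJ X Γ P M M' (.arr A B) → RdJ X Γ Q N N' A →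
      RdJ X Γ (.app P Q) (.app M N) (.app M' N') B
  | pair {Γ P Q M M' N N' A B} : RdJ X Γ P M M' A → RdJ X Γ Q N N' B →
      RdJ X Γ (.pair P Q) (.pair M N) (.pair M' N') (.prod A B)
  | fst {Γ P M N A B} : RdJ X Γ P M N (.prod A B) →
      RdJ X Γ (.fst P) (.fst M) (.fst N) A
  | snd {Γ P M N A B} : RdJ X Γ P M N (.prod A B) →
      RdJ X Γ (.snd P) (.snd M) (.snd N) B
  | conv {Γ P M N M' N' A} : RdJ X Γ P M N A → Beq X.sig Γ M M' A →
      Beq X.sig Γ N N' A → RdJ X Γ P M' N' A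

/-- Occurrence of a free variable in a term. -/
def FreeIn {Sg : Sig1 S} : ℕ → Tm Sg → Prop
  | i, .var n => i = n
  | _, .unit => False
  | i, .pair M N => FreeIn i M ∨ FreeIn i N
  | i, .fst M => FreeIn i M
  | i, .snd M => FreeIn i M
  | i, .lam _ M => FreeIn (i + 1) M
  | i, .app M N => FreeIn i M ∨ FreeIn i N
  | i, .const c a => ∃ j, j < (Sg.opCtx c).length ∧ FreeIn i (a j)

/-- A higher-order rewrite system in the sense of Nipkow: a 2-signature
whose rules have well-typed sides, non-variable left-hand sides, base-type
rule types, and all context variables occurring free in the left-hand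
side. -/
def IsHRS (X : Sig2 S) : Prop :=
  ∀ r : X.Rule,
    HasTy X.sig (X.ruleCtx r) (X.lhs r) (X.ruleTy r) ∧
    HasTy X.sig (X.ruleCtx r) (X.rhs r) (X.ruleTy r) ∧
    (∀ n, X.lhs r ≠ .var n) ∧
    (∃ s, X.ruleTy r = .base s) ∧
    (∀ i, i < (X.ruleCtx r).length → FreeIn i (X.lhs r))

/-- The usual rewrite relation `M →* N` of a higher-order rewrite system:
the reflexive-transitive congruence closure (on βη-classes of well-typed
terms) of the substitution instances of the rules. -/
inductive Rw (X : Sig2 S) : List (Ty S) → Tm X.sig → Tm X.sig → Ty S → Prop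
  | refl {Γ M A} : HasTy X.sig Γ M A → Rw X Γ M M A
  | trans {Γ M N P A} : Rw X Γ M N A → Rw X Γ N P A → Rw X Γ M P A
  | step {Γ} (r : X.Rule) (σ : ℕ → Tm X.sig)
      (h : ∀ i (hi : i < (X.ruleCtx r).length),
        HasTy X.sig Γ (σ i) ((X.ruleCtx r).get ⟨i, hi⟩)) :
      Rw X Γ ((X.lhs r).sub σ) ((X.rhs r).sub σ) (X.ruleTy r)
  | pairCong {Γ M M' N N' A B} : Rw X Γ M M' A → Rw X Γ N N' B →
      Rw X Γ (.pair M N) (.pair M' N') (.prod A B)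
  | fstCong {Γ M M' A B} : Rw X Γ M M' (.prod A B) → Rw X Γ (.fst M) (.fst M') A
  | sndCong {Γ M M' A B} : Rw X Γ M M' (.prod A B) → Rw X Γ (.snd M) (.snd M') B
  | lamCong {Γ M M' A B} : Rw X (A :: Γ) M M' B →
      Rw X Γ (.lam A M) (.lam A M') (.arr A B)
  | appCong {Γ M M' N N' A B} : Rw X Γ M M' (.arr A B) → Rw X Γ N N' A →
      Rw X Γ (.app M N) (.app M' N') B
  | constCong {Γ} {c : X.sig.Op} {args args' : ℕ → Tm X.sig}
      (h : ∀ i (hi : i < (X.sig.opCtx c).length),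
        Rw X Γ (args i) (args' i) ((X.sig.opCtx c).get ⟨i, hi⟩)) :
      Rw X Γ (.const c args) (.const c args') (X.sig.opTy c)
  | conv {Γ M N M' N' A} : Rw X Γ M N A → Beq X.sig Γ M M' A →
      Beq X.sig Γ N N' A → Rw X Γ M' N' A

/-! ### Auxiliary lemmas -/

section Aux

open Tm

variable {Sg : Sig1 S}

/-- A renaming `f` maps typed variables of `Γ` to typed variables of `Δ`. -/
def Good (f : ℕ → ℕ) (Γ Δ : List (Ty S)) : Prop :=
  ∀ n (h : n < Γ.length), ∃ h' : f n < Δ.length, Δ.get ⟨f n, h'⟩ = Γ.get ⟨n, h⟩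

theorem good_lift {f : ℕ → ℕ} {Γ Δ : List (Ty S)} {A : Ty S}
    (hf : Good f Γ Δ) : Good (liftRen f) (A :: Γ) (A :: Δ) := by
  intro n h
  cases n with
  | zero => exact ⟨Nat.succ_pos _, rfl⟩
  | succ n =>
    obtain ⟨h', e⟩ := hf n (Nat.lt_of_succ_lt_succ h)
    exact ⟨Nat.succ_lt_succ h', e⟩

theorem good_succ {Γ : List (Ty S)} {A : Ty S} : Good Nat.succ Γ (A :: Γ) :=
  fun _ h => ⟨Nat.succ_lt_succ h, rfl⟩

theorem hasTy_ren {Γ : List (Ty S)} {M : Tm Sg} {A : Ty S}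
    (hM : HasTy Sg Γ M A) :
    ∀ {Δ : List (Ty S)} {f : ℕ → ℕ}, Good f Γ Δ → HasTy Sg Δ (M.ren f) A := by
  induction hM with
  | var h =>
    intro Δ f hf
    obtain ⟨h', e⟩ := hf _ h
    exact e ▸ HasTy.var h'
  | unit => intro Δ f hf; exact HasTy.unit
  | pair _ _ ih1 ih2 => intro Δ f hf; exact HasTy.pair (ih1 hf) (ih2 hf)
  | fst _ ih => intro Δ f hf; exact HasTy.fst (ih hf)
  | snd _ ih => intro Δ f hf; exact HasTy.snd (ih hf)
  | lam _ ih => intro Δ f hf; exact HasTy.lam (ih (good_lift hf))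
  | app _ _ ih1 ih2 => intro Δ f hf; exact HasTy.app (ih1 hf) (ih2 hf)
  | const h ih => intro Δ f hf; exact HasTy.const (fun i hi => ih i hi hf)

/-- A substitution `σ` maps typed variables of `Γ` to typed terms over `Δ`. -/
def SubTy (σ : ℕ → Tm Sg) (Γ Δ : List (Ty S)) : Prop :=
  ∀ n (h : n < Γ.length), HasTy Sg Δ (σ n) (Γ.get ⟨n, h⟩)

theorem subTy_lift {σ : ℕ → Tm Sg} {Γ Δ : List (Ty S)} {A : Ty S}
    (hσ : SubTy σ Γ Δ) : SubTy (liftSub σ) (A :: Γ) (A :: Δ) := by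
  intro n h
  cases n with
  | zero => exact HasTy.var (by simp)
  | succ n => exact hasTy_ren (hσ n (Nat.lt_of_succ_lt_succ h)) good_succ

theorem hasTy_sub {Γ : List (Ty S)} {M : Tm Sg} {A : Ty S}
    (hM : HasTy Sg Γ M A) :
    ∀ {Δ : List (Ty S)} {σ : ℕ → Tm Sg}, SubTy σ Γ Δ → HasTy Sg Δ (M.sub σ) A := by
  induction hM with
  | var h => intro Δ σ hσ; exact hσ _ h
  | unit => intro Δ σ hσ; exact HasTy.unit
  | pair _ _ ih1 ih2 => intro Δ σ hσ; exact HasTy.pair (ih1 hσ) (ih2 hσ)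
  | fst _ ih => intro Δ σ hσ; exact HasTy.fst (ih hσ)
  | snd _ ih => intro Δ σ hσ; exact HasTy.snd (ih hσ)
  | lam _ ih => intro Δ σ hσ; exact HasTy.lam (ih (subTy_lift hσ))
  | app _ _ ih1 ih2 => intro Δ σ hσ; exact HasTy.app (ih1 hσ) (ih2 hσ)
  | const h ih => intro Δ σ hσ; exact HasTy.const (fun i hi => ih i hi hσ)

theorem subTy_cons {Γ : List (Ty S)} {N : Tm Sg} {A : Ty S}
    (hN : HasTy Sg Γ N A) : SubTy (Tm.cons N Tm.var) (A :: Γ) Γ := by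
  intro n h
  cases n with
  | zero => exact hN
  | succ n => exact HasTy.var (Nat.lt_of_succ_lt_succ h)

theorem liftRen_comp (f g : ℕ → ℕ) (n : ℕ) :
    liftRen g (liftRen f n) = liftRen (fun m => g (f m)) n := by
  cases n <;> rfl

theorem ren_ren (M : Tm Sg) (f g : ℕ → ℕ) :
    (M.ren f).ren g = M.ren (fun n => g (f n)) := by
  induction M generalizing f g with
  | var n => rfl
  | unit => rfl
  | pair M N ih1 ih2 => simp only [Tm.ren]; rw [ih1, ih2]
  | fst M ih => simp only [Tm.ren]; rw [ih]
  | snd M ih => simp only [Tm.ren]; rw [ih]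
  | lam A M ih =>
    simp only [Tm.ren]
    rw [ih]
    exact congrArg (Tm.lam A) (congrArg M.ren (funext (liftRen_comp f g)))
  | app M N ih1 ih2 => simp only [Tm.ren]; rw [ih1, ih2]
  | const c a ih =>
    simp only [Tm.ren]
    exact congrArg (Tm.const c) (funext fun i => ih i f g)

theorem liftSub_ren_liftRen (σ : ℕ → Tm Sg) (f : ℕ → ℕ) (n : ℕ) :
    (liftSub σ n).ren (liftRen f) = liftSub (fun m => (σ m).ren f) n := by
  cases n with
  | zero => rfl
  | succ n =>
    show ((σ n).ren Nat.succ).ren (liftRen f) = ((σ n).ren f).ren Nat.succ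
    rw [ren_ren, ren_ren]
    exact congrArg ((σ n).ren ·) (funext fun m => rfl)

theorem ren_sub (M : Tm Sg) (σ : ℕ → Tm Sg) (f : ℕ → ℕ) :
    (M.sub σ).ren f = M.sub (fun n => (σ n).ren f) := by
  induction M generalizing σ f with
  | var n => rfl
  | unit => rfl
  | pair M N ih1 ih2 => simp only [Tm.sub, Tm.ren]; rw [ih1, ih2]
  | fst M ih => simp only [Tm.sub, Tm.ren]; rw [ih]
  | snd M ih => simp only [Tm.sub, Tm.ren]; rw [ih]
  | lam A M ih =>
    simp only [Tm.sub, Tm.ren]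
    rw [ih]
    exact congrArg (Tm.lam A) (congrArg M.sub (funext (liftSub_ren_liftRen σ f)))
  | app M N ih1 ih2 => simp only [Tm.sub, Tm.ren]; rw [ih1, ih2]
  | const c a ih =>
    simp only [Tm.sub, Tm.ren]
    exact congrArg (Tm.const c) (funext fun i => ih i σ f)

theorem sub_ren (M : Tm Sg) (f : ℕ → ℕ) (σ : ℕ → Tm Sg) :
    (M.ren f).sub σ = M.sub (fun n => σ (f n)) := by
  induction M generalizing σ f with
  | var n => rfl
  | unit => rfl
  | pair M N ih1 ih2 => simp only [Tm.sub, Tm.ren]; rw [ih1, ih2]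
  | fst M ih => simp only [Tm.sub, Tm.ren]; rw [ih]
  | snd M ih => simp only [Tm.sub, Tm.ren]; rw [ih]
  | lam A M ih =>
    simp only [Tm.sub, Tm.ren]
    rw [ih]
    refine congrArg (Tm.lam A) (congrArg M.sub (funext fun n => ?_))
    cases n <;> rfl
  | app M N ih1 ih2 => simp only [Tm.sub, Tm.ren]; rw [ih1, ih2]
  | const c a ih =>
    simp only [Tm.sub, Tm.ren]
    exact congrArg (Tm.const c) (funext fun i => ih i f σ)

theorem beq_ren {Γ : List (Ty S)} {M N : Tm Sg} {A : Ty S}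
    (h : Beq Sg Γ M N A) :
    ∀ {Δ : List (Ty S)} {f : ℕ → ℕ}, Good f Γ Δ → Beq Sg Δ (M.ren f) (N.ren f) A := by
  induction h with
  | refl h => intro Δ f hf; exact Beq.refl (hasTy_ren h hf)
  | symm _ ih => intro Δ f hf; exact Beq.symm (ih hf)
  | trans _ _ ih1 ih2 => intro Δ f hf; exact Beq.trans (ih1 hf) (ih2 hf)
  | pairCong _ _ ih1 ih2 => intro Δ f hf; exact Beq.pairCong (ih1 hf) (ih2 hf)
  | fstCong _ ih => intro Δ f hf; exact Beq.fstCong (ih hf)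
  | sndCong _ ih => intro Δ f hf; exact Beq.sndCong (ih hf)
  | lamCong _ ih => intro Δ f hf; exact Beq.lamCong (ih (good_lift hf))
  | appCong _ _ ih1 ih2 => intro Δ f hf; exact Beq.appCong (ih1 hf) (ih2 hf)
  | constCong _ ih => intro Δ f hf; exact Beq.constCong (fun i hi => ih i hi hf)
  | @beta Γ M N A B hM hN =>
    intro Δ f hf
    simp only [Tm.ren]
    have e : (M.ren (liftRen f)).sub (Tm.cons (N.ren f) Tm.var)
        = (M.sub (Tm.cons N Tm.var)).ren f := by
      rw [sub_ren, ren_sub]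
      exact congrArg M.sub (funext fun n => by cases n <;> rfl)
    exact e ▸ Beq.beta (hasTy_ren hM (good_lift hf)) (hasTy_ren hN hf)
  | @eta Γ M A B h =>
    intro Δ f hf
    simp only [Tm.ren, Tm.liftRen]
    have e : (M.ren Nat.succ).ren (liftRen f) = (M.ren f).ren Nat.succ := by
      rw [ren_ren, ren_ren]
      exact congrArg (M.ren ·) (funext fun m => rfl)
    rw [e]
    exact Beq.eta (hasTy_ren h hf)
  | prodBeta1 hM hN =>
    intro Δ f hf
    exact Beq.prodBeta1 (hasTy_ren hM hf) (hasTy_ren hN hf)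
  | prodBeta2 hM hN =>
    intro Δ f hf
    exact Beq.prodBeta2 (hasTy_ren hM hf) (hasTy_ren hN hf)
  | prodEta h => intro Δ f hf; exact Beq.prodEta (hasTy_ren h hf)
  | unitEta h => intro Δ f hf; exact Beq.unitEta (hasTy_ren h hf)

theorem beq_hasTy {Γ : List (Ty S)} {M N : Tm Sg} {A : Ty S}
    (h : Beq Sg Γ M N A) : HasTy Sg Γ M A ∧ HasTy Sg Γ N A := by
  induction h with
  | refl h => exact ⟨h, h⟩
  | symm _ ih => exact ⟨ih.2, ih.1⟩
  | trans _ _ ih1 ih2 => exact ⟨ih1.1, ih2.2⟩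
  | pairCong _ _ ih1 ih2 =>
    exact ⟨HasTy.pair ih1.1 ih2.1, HasTy.pair ih1.2 ih2.2⟩
  | fstCong _ ih => exact ⟨HasTy.fst ih.1, HasTy.fst ih.2⟩
  | sndCong _ ih => exact ⟨HasTy.snd ih.1, HasTy.snd ih.2⟩
  | lamCong _ ih => exact ⟨HasTy.lam ih.1, HasTy.lam ih.2⟩
  | appCong _ _ ih1 ih2 =>
    exact ⟨HasTy.app ih1.1 ih2.1, HasTy.app ih1.2 ih2.2⟩
  | constCong _ ih =>
    exact ⟨HasTy.const (fun i hi => (ih i hi).1),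
      HasTy.const (fun i hi => (ih i hi).2)⟩
  | beta hM hN =>
    exact ⟨HasTy.app (HasTy.lam hM) hN, hasTy_sub hM (subTy_cons hN)⟩
  | eta h =>
    exact ⟨h, HasTy.lam (HasTy.app (hasTy_ren h good_succ)
      (HasTy.var (by simp)))⟩
  | prodBeta1 hM hN => exact ⟨HasTy.fst (HasTy.pair hM hN), hM⟩
  | prodBeta2 hM hN => exact ⟨HasTy.snd (HasTy.pair hM hN), hN⟩
  | prodEta h => exact ⟨h, HasTy.pair (HasTy.fst h) (HasTy.snd h)⟩
  | unitEta h => exact ⟨h, HasTy.unit⟩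

end Aux

section Main

variable {X : Sig2 S}

theorem rw_ren {Γ : List (Ty S)} {M N : Tm X.sig} {A : Ty S}
    (h : Rw X Γ M N A) :
    ∀ {Δ : List (Ty S)} {f : ℕ → ℕ}, Good f Γ Δ → Rw X Δ (M.ren f) (N.ren f) A := by
  induction h with
  | refl h => intro Δ f hf; exact Rw.refl (hasTy_ren h hf)
  | trans _ _ ih1 ih2 => intro Δ f hf; exact Rw.trans (ih1 hf) (ih2 hf)
  | step r σ h =>
    intro Δ f hf
    rw [ren_sub, ren_sub]
    exact Rw.step r _ (fun i hi => hasTy_ren (h i hi) hf)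
  | pairCong _ _ ih1 ih2 => intro Δ f hf; exact Rw.pairCong (ih1 hf) (ih2 hf)
  | fstCong _ ih => intro Δ f hf; exact Rw.fstCong (ih hf)
  | sndCong _ ih => intro Δ f hf; exact Rw.sndCong (ih hf)
  | lamCong _ ih => intro Δ f hf; exact Rw.lamCong (ih (good_lift hf))
  | appCong _ _ ih1 ih2 => intro Δ f hf; exact Rw.appCong (ih1 hf) (ih2 hf)
  | constCong _ ih => intro Δ f hf; exact Rw.constCong (fun i hi => ih i hi hf)
  | conv _ h1 h2 ih =>
    intro Δ f hf
    exact Rw.conv (ih hf) (beq_ren h1 hf) (beq_ren h2 hf)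

theorem rw_hasTy (hX : IsHRS X) {Γ : List (Ty S)} {M N : Tm X.sig} {A : Ty S}
    (h : Rw X Γ M N A) : HasTy X.sig Γ M A ∧ HasTy X.sig Γ N A := by
  induction h with
  | refl h => exact ⟨h, h⟩
  | trans _ _ ih1 ih2 => exact ⟨ih1.1, ih2.2⟩
  | step r σ h =>
    exact ⟨hasTy_sub (hX r).1 h, hasTy_sub (hX r).2.1 h⟩
  | pairCong _ _ ih1 ih2 =>
    exact ⟨HasTy.pair ih1.1 ih2.1, HasTy.pair ih1.2 ih2.2⟩
  | fstCong _ ih => exact ⟨HasTy.fst ih.1, HasTy.fst ih.2⟩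
  | sndCong _ ih => exact ⟨HasTy.snd ih.1, HasTy.snd ih.2⟩
  | lamCong _ ih => exact ⟨HasTy.lam ih.1, HasTy.lam ih.2⟩
  | appCong _ _ ih1 ih2 =>
    exact ⟨HasTy.app ih1.1 ih2.1, HasTy.app ih1.2 ih2.2⟩
  | constCong _ ih =>
    exact ⟨HasTy.const (fun i hi => (ih i hi).1),
      HasTy.const (fun i hi => (ih i hi).2)⟩
  | conv _ h1 h2 _ => exact ⟨(beq_hasTy h1).2, (beq_hasTy h2).2⟩

/-- Pointwise rewriting of substitutions: `M[σ] →* M[τ]` when `σ →* τ`. -/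
theorem rw_subCong {Γ₀ : List (Ty S)} {M : Tm X.sig} {A : Ty S}
    (hM : HasTy X.sig Γ₀ M A) :
    ∀ {Δ : List (Ty S)} {σ τ : ℕ → Tm X.sig},
      (∀ n (h : n < Γ₀.length), Rw X Δ (σ n) (τ n) (Γ₀.get ⟨n, h⟩)) →
      Rw X Δ (M.sub σ) (M.sub τ) A := by
  induction hM with
  | var h => intro Δ σ τ hστ; exact hστ _ h
  | unit => intro Δ σ τ hστ; exact Rw.refl HasTy.unit
  | pair _ _ ih1 ih2 => intro Δ σ τ hστ; exact Rw.pairCong (ih1 hστ) (ih2 hστ)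
  | fst _ ih => intro Δ σ τ hστ; exact Rw.fstCong (ih hστ)
  | snd _ ih => intro Δ σ τ hστ; exact Rw.sndCong (ih hστ)
  | lam _ ih =>
    intro Δ σ τ hστ
    refine Rw.lamCong (ih ?_)
    intro n h
    cases n with
    | zero => exact Rw.refl (HasTy.var (by simp))
    | succ n => exact rw_ren (hστ n (Nat.lt_of_succ_lt_succ h)) good_succ
  | app _ _ ih1 ih2 => intro Δ σ τ hστ; exact Rw.appCong (ih1 hστ) (ih2 hστ)
  | const _ ih => intro Δ σ τ hστ; exact Rw.constCong (fun i hi => ih i hi hστ)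

/-- Identity reductions are well-typed reductions. -/
theorem toRd_rdJ {Γ : List (Ty S)} {M : Tm X.sig} {A : Ty S}
    (h : HasTy X.sig Γ M A) : RdJ X Γ (Rd.toRd M) M M A := by
  induction h with
  | var h => exact RdJ.var h
  | unit => exact RdJ.unit
  | pair _ _ ih1 ih2 => exact RdJ.pair ih1 ih2
  | fst _ ih => exact RdJ.fst ih
  | snd _ ih => exact RdJ.snd ih
  | lam _ ih => exact RdJ.lam ih
  | app _ _ ih1 ih2 => exact RdJ.app ih1 ih2
  | const _ ih => exact RdJ.const ih

/-- Soundness: every well-typed reduction induces a rewrite. -/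
theorem rdJ_rw (hX : IsHRS X) {Γ : List (Ty S)} {P : Rd X.sig X.Rule}
    {M N : Tm X.sig} {A : Ty S} (h : RdJ X Γ P M N A) : Rw X Γ M N A := by
  induction h with
  | @rule Γ r args Ms Ns h ih =>
    have h1 : Rw X Γ ((X.lhs r).sub Ms) ((X.lhs r).sub Ns) (X.ruleTy r) :=
      rw_subCong (hX r).1 ih
    have h2 : Rw X Γ ((X.lhs r).sub Ns) ((X.rhs r).sub Ns) (X.ruleTy r) :=
      Rw.step r Ns (fun i hi => (rw_hasTy hX (ih i hi)).2)
    exact Rw.trans h1 h2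
  | vcomp _ _ ih1 ih2 => exact Rw.trans ih1 ih2
  | var h => exact Rw.refl (HasTy.var h)
  | unit => exact Rw.refl HasTy.unit
  | const _ ih => exact Rw.constCong ih
  | lam _ ih => exact Rw.lamCong ih
  | app _ _ ih1 ih2 => exact Rw.appCong ih1 ih2
  | pair _ _ ih1 ih2 => exact Rw.pairCong ih1 ih2
  | fst _ ih => exact Rw.fstCong ih
  | snd _ ih => exact Rw.sndCong ih
  | conv _ h1 h2 ih => exact Rw.conv ih h1 h2

/-- Completeness: every rewrite is realized by a well-typed reduction. -/
theorem rw_rdJ {Γ : List (Ty S)} {M N : Tm X.sig} {A : Ty S}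
    (h : Rw X Γ M N A) : ∃ P : Rd X.sig X.Rule, RdJ X Γ P M N A := by
  induction h with
  | refl h => exact ⟨_, toRd_rdJ h⟩
  | trans _ _ ih1 ih2 =>
    obtain ⟨P, hP⟩ := ih1
    obtain ⟨Q, hQ⟩ := ih2
    exact ⟨_, RdJ.vcomp hP hQ⟩
  | step r σ h => exact ⟨_, RdJ.rule (fun i hi => toRd_rdJ (h i hi))⟩
  | pairCong _ _ ih1 ih2 =>
    obtain ⟨P, hP⟩ := ih1
    obtain ⟨Q, hQ⟩ := ih2
    exact ⟨_, RdJ.pair hP hQ⟩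
  | fstCong _ ih => obtain ⟨P, hP⟩ := ih; exact ⟨_, RdJ.fst hP⟩
  | sndCong _ ih => obtain ⟨P, hP⟩ := ih; exact ⟨_, RdJ.snd hP⟩
  | lamCong _ ih => obtain ⟨P, hP⟩ := ih; exact ⟨_, RdJ.lam hP⟩
  | appCong _ _ ih1 ih2 =>
    obtain ⟨P, hP⟩ := ih1
    obtain ⟨Q, hQ⟩ := ih2
    exact ⟨_, RdJ.app hP hQ⟩
  | @constCong Γ c args args' h ih =>
    choose P hP using ih
    refine ⟨.const c (fun i => if h : i < (X.sig.opCtx c).length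
      then P i h else .unit), RdJ.const ?_⟩
    intro i hi
    simpa only [dif_pos hi] using hP i hi
  | conv _ h1 h2 ih => obtain ⟨P, hP⟩ := ih; exact ⟨_, RdJ.conv hP h1 h2⟩

end Main

/-- Soundness and completeness of the categorical semantics: for a
higher-order rewrite system `X`, there is an identity-on-objects,
identity-on-morphisms, locally full cartesian closed 2-functor
`H(X) → R(X)` from the free cartesian closed 2-category on `X` (whose
2-cells are reductions modulo permutation equivalence) to the rewriting
2-category `R(X)`.  Since `R(X)` has at most one 2-cell between parallel
morphisms, this says exactly that for all well-typed parallel `M`, `N`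
there is a 2-cell (a reduction) `M ⟶ N` in `H(X)` if and only if `M`
rewrites to `N` in the usual sense. -/
theorem soundness_and_completeness (X : Sig2 S) (hX : IsHRS X)
    (Γ : List (Ty S)) (M N : Tm X.sig) (A : Ty S)
    (hM : HasTy X.sig Γ M A) (hN : HasTy X.sig Γ N A) :
    (∃ P : Rd X.sig X.Rule, RdJ X Γ P M N A) ↔ Rw X Γ M N A :=
  ⟨fun ⟨_, hP⟩ => rdJ_rw hX hP, fun h => rw_rdJ h⟩
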